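/- arXiv:0907.1388 — 5 statements merged into one kernel-verified Lean document; each statement's English description precedes it below -/
import Mathlib

section
/- Let S_1 = {block matrices (A,0;0,1) : A ∈ SL_2(k)} and S_2 = {(1,0;0,A) : A ∈ SL_2(k)} inside S = SL_3(k). Then the normalizer of S_2 in S_1, namely N_{S_1}(S_2) ∩ S_1, equals the torus D_1 = { diag(a, a^{-1}, 1) : a ∈ k^* }, provided |k| ≥ 4. -/
/-!
Conjugating by an invertible diagonal matrix multiplies the `(i, j)` entry by `dᵢ / dⱼ`: it
fixes the diagonal and keeps zero entries zero, so it preserves the entry pattern cutting out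
`S₂`; hence `D₁` normalizes `S₂`. Conversely, let `g ∈ S₁` normalize `S₂`. Conjugating the
transvection `1 + E₁₂ ∈ S₂` gives `g (1 + E₁₂) = y g` with `y ∈ S₂`; as row `0` of `y` is `e₀`,
the `(0, 2)` entries give `g₀₁ = 0`. Symmetrically `1 + E₂₁ = g x g⁻¹` with `x ∈ S₂`, and column
`0` of `x` gives `g₁₀ = 0`. So `g = diag(a, b, 1)` with `ab = det g = 1`.
-/

/-- The upper-left block copy of `SL₂(k)` inside `SL₃(k)`. -/
def S1 (k : Type) [Field k] : Set (Matrix.SpecialLinearGroup (Fin 3) k) :=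
  {g | (g : Matrix (Fin 3) (Fin 3) k) 0 2 = 0 ∧ (g : Matrix (Fin 3) (Fin 3) k) 1 2 = 0 ∧
       (g : Matrix (Fin 3) (Fin 3) k) 2 0 = 0 ∧ (g : Matrix (Fin 3) (Fin 3) k) 2 1 = 0 ∧
       (g : Matrix (Fin 3) (Fin 3) k) 2 2 = 1}

/-- The lower-right block copy of `SL₂(k)` inside `SL₃(k)`. -/
def S2 (k : Type) [Field k] : Set (Matrix.SpecialLinearGroup (Fin 3) k) :=
  {g | (g : Matrix (Fin 3) (Fin 3) k) 0 0 = 1 ∧ (g : Matrix (Fin 3) (Fin 3) k) 0 1 = 0 ∧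
       (g : Matrix (Fin 3) (Fin 3) k) 0 2 = 0 ∧ (g : Matrix (Fin 3) (Fin 3) k) 1 0 = 0 ∧
       (g : Matrix (Fin 3) (Fin 3) k) 2 0 = 0}

/-- The diagonal torus `D₁ = { diag(a, a⁻¹, 1) }` of `S₁`. -/
def D1 (k : Type) [Field k] : Set (Matrix.SpecialLinearGroup (Fin 3) k) :=
  {g | ∃ a : kˣ, (g : Matrix (Fin 3) (Fin 3) k) = Matrix.diagonal ![(a : k), (a : k)⁻¹, 1]}

open Matrix
open scoped MatrixGroups

section DiagonalConjugation

variable {n K : Type*} [Fintype n] [DecidableEq n] [Field K] {d : n → K} {x y : Matrix n n K}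

lemma apply_eq_zero_iff_of_diagonal_mul_eq (hd : ∀ i, d i ≠ 0)
    (h : diagonal d * x = y * diagonal d) (i j : n) : x i j = 0 ↔ y i j = 0 := by
  have hij := congrFun (congrFun h i) j
  rw [diagonal_mul, mul_diagonal] at hij
  constructor <;> intro h0 <;> simpa [h0, hd] using hij

lemma apply_self_eq_of_diagonal_mul_eq (hd : ∀ i, d i ≠ 0)
    (h : diagonal d * x = y * diagonal d) (i : n) : x i i = y i i := by
  have hii := congrFun (congrFun h i) i
  rw [diagonal_mul, mul_diagonal, mul_comm] at hii
  exact mul_right_cancel₀ (hd i) hii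

end DiagonalConjugation

section

variable {k : Type} [Field k]

lemma mem_S2_iff_of_mul_eq_mul_of_coe_eq_diagonal {g x y : SL(3, k)} {d : Fin 3 → k}
    (hd : ∀ i, d i ≠ 0) (hg : (g : Matrix (Fin 3) (Fin 3) k) = diagonal d) (h : g * x = y * g) :
    x ∈ S2 k ↔ y ∈ S2 k := by
  have hm : diagonal d * (x : Matrix (Fin 3) (Fin 3) k) = y * diagonal d := by
    rw [← hg, ← Matrix.SpecialLinearGroup.coe_mul, h, Matrix.SpecialLinearGroup.coe_mul]
  simp only [S2, Set.mem_ofPred_eq, apply_self_eq_of_diagonal_mul_eq hd hm,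
    apply_eq_zero_iff_of_diagonal_mul_eq hd hm]

lemma transvection_mem_S2 {i j : Fin 3} (hi : i ≠ 0) (hj : j ≠ 0) (hij : i ≠ j) (c : k) :
    Matrix.SpecialLinearGroup.transvection hij c ∈ S2 k := by
  simp [S2, Matrix.SpecialLinearGroup.transvection_coe, hi, hj]

lemma D1_subset_S1 : D1 k ⊆ S1 k := by
  rintro g ⟨a, hg⟩
  simp [S1, hg]

lemma conj_image_S2_eq_of_mem_D1 {g : SL(3, k)} (hg : g ∈ D1 k) :
    (fun x => g * x * g⁻¹) '' S2 k = S2 k := by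
  obtain ⟨a, hga⟩ := hg
  have hd : ∀ i, ![(a : k), (a : k)⁻¹, 1] i ≠ 0 := by
    intro i; fin_cases i <;> simp
  rw [Set.image_eq_preimage_of_inverse (g := fun y => g⁻¹ * y * g) (fun x => by group)
    (fun y => by group)]
  ext y
  exact mem_S2_iff_of_mul_eq_mul_of_coe_eq_diagonal hd hga (by group)

lemma apply_zero_one_eq_zero_of_conj_mem_S2 {g : SL(3, k)}
    (h : g * Matrix.SpecialLinearGroup.transvection (by decide : (1 : Fin 3) ≠ 2) 1 * g⁻¹ ∈ S2 k) :
    g 0 1 = 0 := by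
  set t := Matrix.SpecialLinearGroup.transvection (by decide : (1 : Fin 3) ≠ 2) (1 : k)
  obtain ⟨y, ⟨y00, y01, y02, -, -⟩, hgy⟩ : ∃ y ∈ S2 k, g * t = y * g := ⟨_, h, by group⟩
  have h02 := (Matrix.SpecialLinearGroup.ext_iff _ _).1 hgy 0 2
  rw [Matrix.SpecialLinearGroup.coe_mul, Matrix.SpecialLinearGroup.coe_mul,
    Matrix.SpecialLinearGroup.transvection_coe] at h02
  simpa [mul_apply, Fin.sum_univ_three, y00, y01, y02] using h02

lemma apply_one_zero_eq_zero_of_mem_conj_image_S2 {g : SL(3, k)}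
    (h : Matrix.SpecialLinearGroup.transvection (by decide : (2 : Fin 3) ≠ 1) 1 ∈
      (fun x => g * x * g⁻¹) '' S2 k) :
    g 1 0 = 0 := by
  set t := Matrix.SpecialLinearGroup.transvection (by decide : (2 : Fin 3) ≠ 1) (1 : k)
  obtain ⟨x, ⟨x00, -, -, x10, x20⟩, hgx⟩ := h
  have h20 := (Matrix.SpecialLinearGroup.ext_iff _ _).1
    (show g * x = t * g by rw [← hgx]; group) 2 0
  rw [Matrix.SpecialLinearGroup.coe_mul, Matrix.SpecialLinearGroup.coe_mul,
    Matrix.SpecialLinearGroup.transvection_coe] at h20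
  simpa [mul_apply, Fin.sum_univ_three, x00, x10, x20] using h20.symm

lemma mem_D1_of_mem_S1 {g : SL(3, k)} (hg : g ∈ S1 k) (h01 : g 0 1 = 0) (h10 : g 1 0 = 0) :
    g ∈ D1 k := by
  obtain ⟨h02, h12, h20, h21, h22⟩ := hg
  have hdet : g 0 0 * g 1 1 = 1 := by
    have hdet := g.det_coe
    rw [det_fin_three] at hdet
    simpa [h01, h10, h02, h12, h20, h21, h22] using hdet
  refine ⟨Units.mkOfMulEqOne _ _ hdet, ?_⟩
  ext i j
  fin_cases i <;> fin_cases j <;>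
    simp [h01, h10, h02, h12, h20, h21, h22, eq_inv_of_mul_eq_one_right hdet]

end

theorem stmt1_general (k : Type) [Field k] :
    {g ∈ S1 k | (fun x => g * x * g⁻¹) '' S2 k = S2 k} = D1 k := by
  ext g
  constructor
  · rintro ⟨hg, himg⟩
    refine mem_D1_of_mem_S1 hg (apply_zero_one_eq_zero_of_conj_mem_S2 ?_)
      (apply_one_zero_eq_zero_of_mem_conj_image_S2 ?_)
    · rw [← himg]
      exact Set.mem_image_of_mem _ (transvection_mem_S2 (by decide) (by decide) _ 1)
    · rw [himg]
      exact transvection_mem_S2 (by decide) (by decide) _ 1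
  · intro hg
    exact ⟨D1_subset_S1 hg, conj_image_S2_eq_of_mem_D1 hg⟩

/-- `N_{S₁}(S₂) = D₁` when `|k| ≥ 4`. -/
theorem stmt1 (k : Type) [Field k] (hk : 4 ≤ Nat.card k ∨ Infinite k) :
    {g ∈ S1 k | (fun x => g * x * g⁻¹) '' S2 k = S2 k} = D1 k :=
  stmt1_general k
end

section
/- Let S_1, S_2 be the standard pair of block-embedded SL_2(k)'s in SL_3(k) with |k| ≥ 4, and D_1 the diagonal torus of S_1. Then there exists exactly one subgroup S_2' ≠ S_2 of SL_3(k) normalized by D_1 such that (S_1, S_2') is a standard pair. -/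
/-!
The fixer of a line `U` and a complementary plane `W` contains the transvections
`x ↦ x + f x • w` with `w ∈ W` and `f` vanishing on `U` and at `w`. Shearing with them shows
that the vectors fixed by `fixer k U W` are those of `U`, and that the only invariant plane not
inside `U` is `W`. Hence `h` normalizes `fixer k U W` exactly when it stabilizes `U` and `W`.

As `|k| ≥ 4`, there is `a ≠ 0` with `a² ≠ 1`, so `d = diag(a, a⁻¹, 1) ∈ D₁` has distinct
eigenvalues, and a `d`-stable pair is a coordinate pair `(k eᵢ, {xᵢ = 0})`. For `(U₂, V₂)`
the index `i = 2` is impossible: `e₂` is fixed by `S₁`, so lies in `U₁`, while `U₂ ⊆ V₁`.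
The index `i = 0` gives `S₂`, and `i = 1` gives the unique `S₂'`.
-/

/-- The subgroup of `SL₃(k)` fixing `U` pointwise and preserving `Vs`. -/
def fixer (k : Type) [Field k] (U Vs : Submodule k (Fin 3 → k)) :
    Set (Matrix.SpecialLinearGroup (Fin 3) k) :=
  {g | (∀ v ∈ U, (g : Matrix (Fin 3) (Fin 3) k).mulVec v = v) ∧
       (∀ v ∈ Vs, (g : Matrix (Fin 3) (Fin 3) k).mulVec v ∈ Vs)}

/-- `(P, Q)` is a standard pair for `SL₃(k)` acting on `k³`: there are decompositions
`k³ = U₁ ⊕ V₁ = U₂ ⊕ V₂` with `dim Uᵢ = 1`, `dim Vᵢ = 2`, `U₁ ⊆ V₂`, `U₂ ⊆ V₁`, and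
`P` (resp. `Q`) is the full copy of `SL(V₁)` (resp. `SL(V₂)`) centralizing `U₁`
(resp. `U₂`) and preserving `V₁` (resp. `V₂`). -/
def StandardPair (k : Type) [Field k]
    (P Q : Set (Matrix.SpecialLinearGroup (Fin 3) k)) : Prop :=
  ∃ U1 V1 U2 V2 : Submodule k (Fin 3 → k),
    Module.finrank k U1 = 1 ∧ Module.finrank k V1 = 2 ∧
    Module.finrank k U2 = 1 ∧ Module.finrank k V2 = 2 ∧
    IsCompl U1 V1 ∧ IsCompl U2 V2 ∧ U1 ≤ V2 ∧ U2 ≤ V1 ∧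
    P = fixer k U1 V1 ∧ Q = fixer k U2 V2

open Module Matrix Submodule

section

variable {k : Type*} [Field k] {n : Type*}

def coordHyperplane (i : n) : Submodule k (n → k) := LinearMap.ker (LinearMap.proj i)

@[simp] lemma mem_coordHyperplane {i : n} {x : n → k} : x ∈ coordHyperplane i ↔ x i = 0 :=
  Iff.rfl

variable [DecidableEq n]

def coordLine (i : n) : Submodule k (n → k) := k ∙ Pi.single i 1

lemma finrank_coordLine (i : n) : finrank k (coordLine (k := k) i) = 1 :=
  finrank_span_singleton (by simp)

lemma coordLine_le_coordHyperplane {i j : n} (hij : i ≠ j) :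
    coordLine (k := k) i ≤ coordHyperplane j := by
  simp [coordLine, span_le, hij.symm]

variable [Fintype n]

lemma diagonal_mulVec_mem_coordLine (v : n → k) {i : n} {x : n → k} (hx : x ∈ coordLine i) :
    diagonal v *ᵥ x ∈ coordLine i := by
  obtain ⟨c, rfl⟩ := mem_span_singleton.1 hx
  rw [mulVec_smul, diagonal_mulVec_single, mul_one]
  refine (coordLine i).smul_mem c (mem_span_singleton.2 ⟨v i, ?_⟩)
  ext j
  simp [Pi.single_apply]

lemma diagonal_mulVec_mem_coordHyperplane (v : n → k) {i : n} {x : n → k}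
    (hx : x ∈ coordHyperplane i) : diagonal v *ᵥ x ∈ coordHyperplane i := by
  simp_all [mulVec_diagonal]

lemma isCompl_coordLine_coordHyperplane (i : n) :
    IsCompl (coordLine (k := k) i) (coordHyperplane i) := by
  refine (Module.Dual.isCompl_ker_of_disjoint_of_ne_bot
    (f := (LinearMap.proj i : (n → k) →ₗ[k] k)) ?_ ?_ ?_).symm
  · intro h
    simpa using LinearMap.congr_fun h (Pi.single i 1)
  · rw [disjoint_comm, Submodule.disjoint_def]
    intro x hx hx'
    obtain ⟨c, rfl⟩ := Submodule.mem_span_singleton.1 hx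
    simp_all
  · simp [coordLine]

lemma finrank_coordHyperplane (i : n) :
    finrank k (coordHyperplane (k := k) i) = Fintype.card n - 1 := by
  have := Submodule.finrank_add_eq_of_isCompl (isCompl_coordLine_coordHyperplane (k := k) i)
  rw [finrank_coordLine, Module.finrank_fintype_fun_eq_card] at this
  omega

lemma prod_sub_mul_mem_of_diagonal_invariant {v : n → k} {W : Submodule k (n → k)}
    (hW : ∀ x ∈ W, diagonal v *ᵥ x ∈ W) {x : n → k} (hx : x ∈ W) (s : Finset n) :
    (fun l => (∏ j ∈ s, (v l - v j)) * x l) ∈ W := by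
  induction s using Finset.induction_on with
  | empty => simpa using hx
  | insert j s hj ih =>
    convert W.sub_mem (hW _ ih) (W.smul_mem (v j) ih) using 1
    funext l
    simp only [Finset.prod_insert hj, mulVec_diagonal, Pi.sub_apply, Pi.smul_apply, smul_eq_mul]
    ring

lemma single_mem_of_diagonal_invariant {v : n → k} (hv : Function.Injective v)
    {W : Submodule k (n → k)} (hW : ∀ x ∈ W, diagonal v *ᵥ x ∈ W) {x : n → k} (hx : x ∈ W)
    (i : n) : Pi.single i (x i) ∈ W := by
  set c := ∏ j ∈ Finset.univ.erase i, (v i - v j)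
  have hc : c ≠ 0 := Finset.prod_ne_zero_iff.2 fun j hj =>
    sub_ne_zero.2 (hv.ne (Finset.ne_of_mem_erase hj).symm)
  -- applying `∏ j ≠ i, (diagonal v - v j)` kills every coordinate but the `i`-th
  have key :
      (fun l => (∏ j ∈ Finset.univ.erase i, (v l - v j)) * x l) = c • Pi.single i (x i) := by
    funext l
    by_cases hl : l = i
    · subst hl; simp [c]
    · simp [hl, Finset.prod_eq_zero (Finset.mem_erase.2 ⟨hl, Finset.mem_univ l⟩)]
  have := W.smul_mem c⁻¹ (prod_sub_mul_mem_of_diagonal_invariant hW hx (Finset.univ.erase i))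
  rwa [key, smul_smul, inv_mul_cancel₀ hc, one_smul] at this

lemma exists_eq_coordLine_of_diagonal_invariant {v : n → k} (hv : Function.Injective v)
    {U W : Submodule k (n → k)} (hU : finrank k U = 1) (hc : IsCompl U W)
    (hUv : ∀ x ∈ U, diagonal v *ᵥ x ∈ U) (hWv : ∀ x ∈ W, diagonal v *ᵥ x ∈ W) :
    ∃ i, U = coordLine i ∧ W = coordHyperplane i := by
  obtain ⟨u, huU, hu⟩ := Submodule.exists_mem_ne_zero_of_ne_bot
    (Submodule.one_le_finrank_iff.1 hU.ge)
  obtain ⟨i, hi⟩ := Function.ne_iff.1 hu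
  have hline : coordLine i ≤ U := by
    rw [coordLine, span_singleton_le_iff_mem]
    have := U.smul_mem (u i)⁻¹ (single_mem_of_diagonal_invariant hv hUv huU i)
    rwa [← Pi.single_smul, smul_eq_mul, inv_mul_cancel₀ hi] at this
  have hUi : U = coordLine i :=
    (eq_of_le_of_finrank_eq hline (by rw [finrank_coordLine, hU])).symm
  refine ⟨i, hUi, eq_of_le_of_finrank_eq (fun x hx => ?_) ?_⟩
  · have hxU : Pi.single i (x i) ∈ U := by
      rw [hUi, coordLine, mem_span_singleton]
      exact ⟨x i, by simp [← Pi.single_smul]⟩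
    simpa using Submodule.disjoint_def.1 hc.disjoint _ hxU
      (single_mem_of_diagonal_invariant hv hWv hx i)
  · have h1 := Submodule.finrank_add_eq_of_isCompl hc
    have h2 := Submodule.finrank_add_eq_of_isCompl (isCompl_coordLine_coordHyperplane (k := k) i)
    rw [hU] at h1
    rw [finrank_coordLine] at h2
    omega

lemma inv_smul_mem_of_forall_smul_mem {h : SpecialLinearGroup n k} {U : Submodule k (n → k)}
    (hU : ∀ x ∈ U, h • x ∈ U) {x : n → k} (hx : x ∈ U) : h⁻¹ • x ∈ U := by
  let e := SpecialLinearGroup.toLin' h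
  have hmap : U.map (e : (n → k) →ₗ[k] n → k) = U := by
    refine eq_of_le_of_finrank_eq ?_ (LinearEquiv.finrank_map_eq e U)
    rintro _ ⟨y, hy, rfl⟩
    exact hU y hy
  rw [← hmap] at hx
  obtain ⟨y, hy, rfl⟩ := hx
  change h⁻¹ • h • y ∈ U
  rwa [inv_smul_smul]

end

section

variable {k : Type} [Field k] {U W : Submodule k (Fin 3 → k)}

lemma mem_fixer_iff {g : SpecialLinearGroup (Fin 3) k} :
    g ∈ fixer k U W ↔ (∀ u ∈ U, g • u = u) ∧ ∀ w ∈ W, g • w ∈ W :=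
  Iff.rfl

lemma exists_mem_fixer_smul_eq {ι : Type*} (hc : IsCompl U W) (b : Basis ι k W) {i j : ι}
    (hij : i ≠ j) : ∃ g ∈ fixer k U W, ∀ x, g • x =
      x + b.repr (W.projectionOnto U hc.symm x) j • (b i : Fin 3 → k) := by
  set f : Dual k (Fin 3 → k) := (b.coord j).comp (W.projectionOnto U hc.symm)
  have hf : f (b i) = 0 := by simp [f, projectionOnto_apply_left, hij]
  let g : SpecialLinearGroup (Fin 3) k := ⟨LinearMap.toMatrix' (LinearMap.transvection f (b i)),
    by rw [LinearMap.det_toMatrix', LinearMap.transvection.det, hf, add_zero]⟩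
  have hg : ∀ x, g • x = x + f x • (b i : Fin 3 → k) := fun x =>
    LinearMap.toMatrix'_mulVec _ x
  refine ⟨g, mem_fixer_iff.2 ⟨fun u hu => ?_, fun w hw => ?_⟩, hg⟩
  · simp [hg, f, projectionOnto_apply_of_mem_right hc.symm hu]
  · rw [hg]
    exact W.add_mem hw (W.smul_mem _ (b i).2)

lemma mem_of_forall_fixer_smul_eq (hc : IsCompl U W) (hW : 1 < finrank k W) {x : Fin 3 → k}
    (hx : ∀ g ∈ fixer k U W, g • x = x) : x ∈ U := by
  have : Nontrivial (Fin (finrank k W)) := Fin.nontrivial_iff_two_le.2 hW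
  let b := Module.finBasis k W
  rw [← projectionOnto_apply_eq_zero_iff hc.symm]
  refine b.repr.injective (Finsupp.ext fun j => ?_)
  obtain ⟨i, hij⟩ := exists_ne j
  obtain ⟨g, hg, hgx⟩ := exists_mem_fixer_smul_eq hc b hij
  have := hgx x
  rw [hx g hg, left_eq_add, smul_eq_zero] at this
  simpa [b.ne_zero i] using this

lemma le_of_forall_fixer_smul_mem (hc : IsCompl U W) (hW : 1 < finrank k W)
    {X : Submodule k (Fin 3 → k)}
    (hX : ∀ g ∈ fixer k U W, ∀ x ∈ X, g • x ∈ X) (hXU : ¬X ≤ U) :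
    W ≤ X := by
  have : Nontrivial (Fin (finrank k W)) := Fin.nontrivial_iff_two_le.2 hW
  let b := Module.finBasis k W
  -- the shear `x ↦ x + (j-th coordinate of x) • b i` moves `x` by a nonzero multiple of `b i`
  have hbasis : ∀ x ∈ X, ∀ j, b.repr (W.projectionOnto U hc.symm x) j ≠ 0 →
      ∀ i, i ≠ j → (b i : Fin 3 → k) ∈ X := by
    intro x hx j hj i hij
    obtain ⟨g, hg, hgx⟩ := exists_mem_fixer_smul_eq hc b hij
    have := X.smul_mem (b.repr (W.projectionOnto U hc.symm x) j)⁻¹ (X.sub_mem (hX g hg x hx) hx)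
    rwa [hgx, add_sub_cancel_left, smul_smul, inv_mul_cancel₀ hj, one_smul] at this
  obtain ⟨x, hxX, hxU⟩ := SetLike.not_le_iff_exists.1 hXU
  rw [← projectionOnto_apply_eq_zero_iff hc.symm] at hxU
  obtain ⟨j, hj⟩ : ∃ j, b.repr (W.projectionOnto U hc.symm x) j ≠ 0 := by
    by_contra! h
    exact hxU (b.repr.injective (Finsupp.ext fun j => by simpa using h j))
  obtain ⟨i, hij⟩ := exists_ne j
  have hi : (b i : Fin 3 → k) ∈ X := hbasis x hxX j hj i hij
  have hall : ∀ l, (b l : Fin 3 → k) ∈ X := by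
    intro l
    by_cases hl : l = i
    · exact hl ▸ hi
    · exact hbasis _ hi i (by simp [projectionOnto_apply_left]) l hl
  intro w hw
  rw [← Subtype.coe_mk w hw, ← b.sum_repr ⟨w, hw⟩, Submodule.coe_sum]
  exact X.sum_mem fun l _ => by simpa using X.smul_mem _ (hall l)

lemma forall_conj_mem_fixer_iff (hU : finrank k U = 1) (hW : finrank k W = 2) (hc : IsCompl U W)
    (h : SpecialLinearGroup (Fin 3) k) :
    (∀ g ∈ fixer k U W, h⁻¹ * g * h ∈ fixer k U W) ↔
      (∀ x ∈ U, h • x ∈ U) ∧ ∀ x ∈ W, h • x ∈ W := by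
  constructor
  · intro H
    have key : ∀ g, ∀ x : Fin 3 → k, g • h • x = h • (h⁻¹ * g * h) • x := by
      simp [mul_smul]
    refine ⟨fun u hu => ?_, fun w hw => ?_⟩
    · refine mem_of_forall_fixer_smul_eq hc (by omega) fun g hg => ?_
      rw [key g, (mem_fixer_iff.1 (H g hg)).1 u hu]
    · let X := W.map (SpecialLinearGroup.toLin' h : (Fin 3 → k) →ₗ[k] Fin 3 → k)
      have hXW : finrank k X = finrank k W := LinearEquiv.finrank_map_eq _ W
      have hWX : W ≤ X := by
        refine le_of_forall_fixer_smul_mem hc (by omega) ?_ fun hXU => ?_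
        · rintro g hg _ ⟨y, hy, rfl⟩
          exact ⟨_, (mem_fixer_iff.1 (H g hg)).2 y hy, (key g y).symm⟩
        · have := Submodule.finrank_mono hXU
          omega
      rw [eq_of_le_of_finrank_eq hWX hXW.symm]
      exact ⟨w, hw, rfl⟩
  · rintro ⟨hUh, hWh⟩ g hg
    obtain ⟨hgU, hgW⟩ := mem_fixer_iff.1 hg
    refine mem_fixer_iff.2 ⟨fun u hu => ?_, fun w hw => ?_⟩
    · rw [mul_smul, mul_smul, hgU _ (hUh u hu), inv_smul_smul]
    · rw [mul_smul, mul_smul]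
      exact inv_smul_mem_of_forall_smul_mem hWh (hgW _ (hWh w hw))

lemma mem_fixer_coord_iff {i : Fin 3} {g : SpecialLinearGroup (Fin 3) k} :
    g ∈ fixer k (coordLine i) (coordHyperplane i) ↔
      (∀ j, (g : Matrix (Fin 3) (Fin 3) k) j i = if j = i then 1 else 0) ∧
        ∀ j, j ≠ i → (g : Matrix (Fin 3) (Fin 3) k) i j = 0 := by
  have hcol : g • (Pi.single i 1 : Fin 3 → k) = fun j => (g : Matrix (Fin 3) (Fin 3) k) j i :=
    mulVec_single_one _ i
  rw [mem_fixer_iff]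
  apply and_congr
  · constructor
    · intro h j
      rw [← congrFun hcol j, h _ (mem_span_singleton_self _), Pi.single_apply]
    · intro h u hu
      obtain ⟨c, rfl⟩ := mem_span_singleton.1 hu
      rw [smul_comm, hcol]
      congr 1
      funext j
      simp [h j, Pi.single_apply]
  · constructor
    · intro h j hj
      have : ((g : Matrix (Fin 3) (Fin 3) k) *ᵥ Pi.single j 1) i = 0 :=
        h (Pi.single j 1) (by simp [hj.symm])
      simpa using this
    · intro h w hw
      change ((g : Matrix (Fin 3) (Fin 3) k) *ᵥ w) i = 0
      simp only [mulVec, dotProduct]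
      refine Finset.sum_eq_zero fun j _ => ?_
      by_cases hj : j = i
      · simp [hj, mem_coordHyperplane.1 hw]
      · simp [h j hj]

lemma S1_eq : S1 k = fixer k (coordLine 2) (coordHyperplane 2) := by
  ext g
  rw [mem_fixer_coord_iff]
  constructor <;> simp +contextual [S1, Fin.forall_fin_succ]

lemma S2_eq : S2 k = fixer k (coordLine 0) (coordHyperplane 0) := by
  ext g
  rw [mem_fixer_coord_iff]
  constructor <;> simp +contextual [S2, Fin.forall_fin_succ]

def torus : kˣ →* SpecialLinearGroup (Fin 3) k where
  toFun a := ⟨diagonal ![(a : k), (a : k)⁻¹, 1], by simp [det_diagonal, Fin.prod_univ_three]⟩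
  map_one' := by
    ext i j
    fin_cases i <;> fin_cases j <;> simp
  map_mul' a b := by
    refine Subtype.ext ?_
    change diagonal _ = diagonal _ * diagonal _
    rw [diagonal_mul_diagonal]
    congr 1
    funext i
    fin_cases i <;> simp [mul_comm]

lemma mem_D1_iff {d : SpecialLinearGroup (Fin 3) k} : d ∈ D1 k ↔ ∃ a, torus a = d :=
  exists_congr fun _ => ⟨fun h => Subtype.ext h.symm, fun h => congrArg Subtype.val h.symm⟩

lemma injective_torus_entries {a : kˣ} (ha : a ^ 2 ≠ 1) :
    Function.Injective ![(a : k), (a : k)⁻¹, 1] := by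
  have h1 : (a : k) ≠ 1 := fun h => ha (Units.ext (by simp [h]))
  have h2 : (a : k) ≠ (a : k)⁻¹ := fun h => ha (Units.ext (by
    rw [Units.val_pow_eq_pow_val, sq]
    nth_rewrite 2 [h]
    simp))
  have h3 : (a : k)⁻¹ ≠ 1 := inv_ne_one.2 h1
  intro i j
  fin_cases i <;> fin_cases j <;> simp [h1, h2, h3, h1.symm, h2.symm, h3.symm]

lemma exists_unit_sq_ne_one (hk : 4 ≤ Nat.card k ∨ Infinite k) : ∃ a : kˣ, a ^ 2 ≠ 1 := by
  by_contra! h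
  have hsurj : Function.Surjective ![(0 : k), 1, -1] := by
    intro x
    by_cases hx : x = 0
    · exact ⟨0, hx.symm⟩
    · have : x = 1 ∨ x = -1 := by simpa using congrArg Units.val (h (Units.mk0 x hx))
      rcases this with rfl | rfl
      · exact ⟨1, rfl⟩
      · exact ⟨2, rfl⟩
  rcases hk with h4 | hinf
  · have := (Nat.card_le_card_of_surjective _ hsurj).trans_eq (Nat.card_fin 3)
    omega
  · exact (Finite.of_surjective _ hsurj).false

lemma finrank_coordHyperplane_fin_three (i : Fin 3) :
    finrank k (coordHyperplane (k := k) i) = 2 := by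
  simp [finrank_coordHyperplane]

lemma fixer_coord_injective :
    Function.Injective fun i : Fin 3 => fixer k (coordLine i) (coordHyperplane i) := by
  intro i j h
  simp only at h
  have hj : (Pi.single j 1 : Fin 3 → k) ∈ coordLine i := by
    refine mem_of_forall_fixer_smul_eq (isCompl_coordLine_coordHyperplane i)
      (by rw [finrank_coordHyperplane_fin_three]; norm_num) fun g hg => ?_
    rw [h] at hg
    exact (mem_fixer_iff.1 hg).1 _ (mem_span_singleton_self _)
  obtain ⟨c, hc⟩ := mem_span_singleton.1 hj
  by_contra hij
  simpa [Pi.single_apply, hij] using congrFun hc j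

lemma standardPair_fixer_coord {i j : Fin 3} (hij : i ≠ j) :
    StandardPair k (fixer k (coordLine i) (coordHyperplane i))
      (fixer k (coordLine j) (coordHyperplane j)) :=
  ⟨_, _, _, _, finrank_coordLine i, finrank_coordHyperplane_fin_three i, finrank_coordLine j,
    finrank_coordHyperplane_fin_three j, isCompl_coordLine_coordHyperplane i,
    isCompl_coordLine_coordHyperplane j, coordLine_le_coordHyperplane hij,
    coordLine_le_coordHyperplane hij.symm, rfl, rfl⟩

lemma conj_mem_fixer_coord {d : SpecialLinearGroup (Fin 3) k} (hd : d ∈ D1 k) (i : Fin 3)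
    {s : SpecialLinearGroup (Fin 3) k} (hs : s ∈ fixer k (coordLine i) (coordHyperplane i)) :
    d * s * d⁻¹ ∈ fixer k (coordLine i) (coordHyperplane i) := by
  obtain ⟨a, rfl⟩ := mem_D1_iff.1 hd
  have := (forall_conj_mem_fixer_iff (finrank_coordLine i) (finrank_coordHyperplane_fin_three i)
    (isCompl_coordLine_coordHyperplane i) (torus a⁻¹)).2
    ⟨fun _ => diagonal_mulVec_mem_coordLine _, fun _ => diagonal_mulVec_mem_coordHyperplane _⟩
  simpa using this s hs

lemma exists_eq_fixer_coord_of_standardPair {T : Set (SpecialLinearGroup (Fin 3) k)}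
    (hT : StandardPair k (S1 k) T) (hN : ∀ d ∈ D1 k, ∀ s ∈ T, d * s * d⁻¹ ∈ T)
    {a : kˣ} (ha : a ^ 2 ≠ 1) :
    ∃ i, i ≠ 2 ∧ T = fixer k (coordLine i) (coordHyperplane i) := by
  obtain ⟨U1, V1, U2, V2, -, hV1, hU2, hV2, hc1, hc2, -, hU2V1, hS1, rfl⟩ := hT
  have hstab := (forall_conj_mem_fixer_iff hU2 hV2 hc2 (torus a)).1 fun g hg => by
    simpa using hN _ (mem_D1_iff.2 ⟨a⁻¹, rfl⟩) g hg
  obtain ⟨i, rfl, rfl⟩ :=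
    exists_eq_coordLine_of_diagonal_invariant (injective_torus_entries ha) hU2 hc2 hstab.1 hstab.2
  refine ⟨i, ?_, rfl⟩
  rintro rfl
  have hU1 : (Pi.single 2 1 : Fin 3 → k) ∈ U1 := by
    refine mem_of_forall_fixer_smul_eq hc1 (by omega) fun g hg => ?_
    rw [← hS1, S1_eq] at hg
    exact (mem_fixer_iff.1 hg).1 _ (mem_span_singleton_self _)
  have hV1' : (Pi.single 2 1 : Fin 3 → k) ∈ V1 := hU2V1 (mem_span_singleton_self _)
  simpa using (Submodule.disjoint_def.1 hc1.disjoint) _ hU1 hV1'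

end

/-- if `|k| ≥ 4`, there is exactly one subgroup `S₂' ≠ S₂` normalized by
`D₁` such that `(S₁, S₂')` is a standard pair. -/
theorem stmt4 (k : Type) [Field k] (hk : 4 ≤ Nat.card k ∨ Infinite k) :
    ∃! S2' : Set (Matrix.SpecialLinearGroup (Fin 3) k),
      S2' ≠ S2 k ∧ StandardPair k (S1 k) S2' ∧
      ∀ d ∈ D1 k, ∀ s ∈ S2', d * s * d⁻¹ ∈ S2' := by
  obtain ⟨a, ha⟩ := exists_unit_sq_ne_one hk
  refine ⟨fixer k (coordLine 1) (coordHyperplane 1),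
    ⟨?_, ?_, fun d hd s => conj_mem_fixer_coord hd 1⟩, ?_⟩
  · rw [S2_eq]
    exact fixer_coord_injective.ne (by decide)
  · rw [S1_eq]
    exact standardPair_fixer_coord (by decide)
  · rintro T ⟨hT, hSP, hN⟩
    obtain ⟨i, hi, rfl⟩ := exists_eq_fixer_coord_of_standardPair hSP hN ha
    fin_cases i
    · exact absurd S2_eq.symm hT
    · rfl
    · exact absurd rfl hi
end

section
/- For n ≥ 3, the automorphism ω of SL_n(k) sending A to (A^t)^{-1} is not induced by conjugation by any element of GL_n(k). -/
/-!
Suppose `g A g⁻¹ = (Aᵀ)⁻¹` on `SLₙ`. Applied to the transvection `A = 1 + E_ij` this reads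
`g (1 + E_ij) = (1 - E_ji) g`, and comparing the entries in column `j` of a row `a ≠ j` gives
`g a i = 0`. For `n ≥ 3` every pair `(a, i)` admits such a `j ∉ {a, i}`, so `g = 0`, which is not
invertible.
-/

namespace Matrix

variable {ι R : Type*} [DecidableEq ι] [CommRing R]

theorem transpose_transvection (i j : ι) (c : R) :
    (transvection i j c)ᵀ = transvection j i c := by
  simp [transvection, transpose_add, transpose_single]

variable [Fintype ι]

theorem inv_transvection {i j : ι} (hij : i ≠ j) (c : R) :
    (transvection i j c)⁻¹ = transvection i j (-c) :=
  inv_eq_right_inv <| by rw [transvection_mul_transvection_same _ _ hij, add_neg_cancel,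
    transvection_zero]

theorem apply_eq_zero_of_mul_transvection_eq {M : Matrix ι ι R} {a i j : ι} (haj : a ≠ j)
    (h : M * transvection i j 1 = transvection j i (-1) * M) : M a i = 0 := by
  have := congr_fun₂ h a j
  rwa [mul_transvection_apply_same, transvection_mul_apply_of_ne _ _ _ _ haj, one_mul,
    add_eq_left] at this

theorem eq_zero_of_forall_mul_transvection_eq {M : Matrix ι ι R} (hι : 3 ≤ Fintype.card ι)
    (h : ∀ i j, i ≠ j → M * transvection i j 1 = transvection j i (-1) * M) : M = 0 := by
  ext a i
  obtain ⟨j, hja, hji⟩ := ENat.exists_ne_ne_of_three_le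
    (by simpa [ENat.card_eq_coe_fintype_card] using hι) a i
  exact apply_eq_zero_of_mul_transvection_eq (Ne.symm hja) (h i j (Ne.symm hji))

theorem not_forall_transpose_inv_eq_conj [Nontrivial R] (hι : 3 ≤ Fintype.card ι)
    (g : (Matrix ι ι R)ˣ) :
    ¬ ∀ A : SpecialLinearGroup ι R,
      (A : Matrix ι ι R)ᵀ⁻¹ = g * A * ((g⁻¹ : (Matrix ι ι R)ˣ) : Matrix ι ι R) := by
  intro hg
  have : Nonempty ι := Fintype.card_pos_iff.mp (by omega)
  refine g.ne_zero (eq_zero_of_forall_mul_transvection_eq hι fun i j hij => ?_)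
  have hA := hg ⟨transvection i j 1, det_transvection_of_ne i j hij 1⟩
  rw [SpecialLinearGroup.coe_mk, transpose_transvection, inv_transvection hij.symm] at hA
  rw [hA, Units.inv_mul_cancel_right]

end Matrix

theorem stmt6_general (k : Type) [Field k] (n : ℕ) (hn : 3 ≤ n) :
    ¬ ∃ g : (Matrix (Fin n) (Fin n) k)ˣ,
        ∀ A : Matrix.SpecialLinearGroup (Fin n) k,
          ((A : Matrix (Fin n) (Fin n) k).transpose)⁻¹ =
            (g : Matrix (Fin n) (Fin n) k) * (A : Matrix (Fin n) (Fin n) k) *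
              ((g⁻¹ : (Matrix (Fin n) (Fin n) k)ˣ) : Matrix (Fin n) (Fin n) k) :=
  fun ⟨g, hg⟩ => Matrix.not_forall_transpose_inv_eq_conj (by simpa using hn) g hg

/-- for `n ≥ 3`, the automorphism `A ↦ (Aᵀ)⁻¹` of `SLₙ(k)` is not induced by
conjugation by any element of `GLₙ(k)`. -/
theorem stmt6 (k : Type) [Field k] (n : ℕ) (hn : 3 ≤ n)
    (hk : 2 < Nat.card k ∨ Infinite k) :
    ¬ ∃ g : (Matrix (Fin n) (Fin n) k)ˣ,
        ∀ A : Matrix.SpecialLinearGroup (Fin n) k,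
          ((A : Matrix (Fin n) (Fin n) k).transpose)⁻¹ =
            (g : Matrix (Fin n) (Fin n) k) * (A : Matrix (Fin n) (Fin n) k) *
              ((g⁻¹ : (Matrix (Fin n) (Fin n) k)ˣ) : Matrix (Fin n) (Fin n) k) :=
  stmt6_general k n hn
end

section
/- The map A ↦ (A^t)^{-1} does not preserve eigenvalues on SL_n(k) for n ≥ 3: there exists A ∈ SL_n(k) and an eigenvalue λ of A such that λ is not an eigenvalue of (A^t)^{-1}. -/
/-!
Pick `c ∈ k` outside `{0, 1, -1}`, which is possible as soon as `k` has at least four elements,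
and take `A = diag(c, c, c⁻², 1, …, 1) ∈ SLₙ(k)`; this needs three diagonal slots. Then `c` is an
eigenvalue of `A`, while `(Aᵀ)⁻¹ = diag(c⁻¹, c⁻¹, c², 1, …, 1)` has eigenvalues `c⁻¹`, `c²` and `1`,
none of which equals `c`.
-/

open Matrix

theorem exists_notMem_finset_of_card_lt {α : Type*} (s : Finset α)
    (h : s.card < Nat.card α ∨ Infinite α) : ∃ a, a ∉ s := by
  refine s.exists_not_mem_of_card_lt_enatCard ?_
  rcases h with h | h
  · have : Finite α := Nat.finite_of_card_ne_zero (by omega)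
    exact ENat.card_eq_coe_natCard α ▸ Nat.cast_lt.2 h
  · simp

theorem exists_ne_zero_ne_one_ne_neg_one {k : Type*} [Zero k] [One k] [Neg k]
    (hk : 4 ≤ Nat.card k ∨ Infinite k) : ∃ c : k, c ≠ 0 ∧ c ≠ 1 ∧ c ≠ -1 := by
  classical
  have hcard : ({0, 1, -1} : Finset k).card < Nat.card k ∨ Infinite k :=
    hk.imp_left (Finset.card_le_three.trans_lt ·)
  simpa using exists_notMem_finset_of_card_lt _ hcard

theorem spectrum_inv_transpose_diagonal {ι k : Type*} [Fintype ι] [DecidableEq ι] [Field k]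
    {d : ι → k} (hd : ∀ i, d i ≠ 0) :
    spectrum k (diagonal d)ᵀ⁻¹ = Set.range fun i ↦ (d i)⁻¹ := by
  have hinv : (diagonal d)⁻¹ = diagonal fun i ↦ (d i)⁻¹ :=
    inv_eq_right_inv (by simp [diagonal_mul_diagonal, hd])
  rw [diagonal_transpose, hinv, spectrum_diagonal]

def ccInvSqOnes {k : Type*} [Field k] (m : ℕ) (c : k) : Fin (m + 3) → k :=
  Fin.cons c (Fin.cons c (Fin.cons (c ^ 2)⁻¹ 1))

theorem prod_ccInvSqOnes {k : Type*} [Field k] (m : ℕ) {c : k} (hc : c ≠ 0) :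
    ∏ i, ccInvSqOnes m c i = 1 := by
  simp only [ccInvSqOnes, Fin.prod_cons, Pi.one_apply, Finset.prod_const_one]
  field_simp

theorem self_notMem_inv_sq_one {k : Type*} [Field k] {c : k} (hc0 : c ≠ 0) (hc1 : c ≠ 1)
    (hcn1 : c ≠ -1) : c ∉ ({c⁻¹, c ^ 2, 1} : Set k) := by
  simp only [Set.mem_insert_iff, Set.mem_singleton_iff, not_or]
  refine ⟨fun h ↦ ?_, fun h ↦ ?_, hc1⟩
  · have hsq : c * c = 1 := by
      nth_rw 2 [h]
      exact mul_inv_cancel₀ hc0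
    rcases mul_self_eq_one_iff.1 hsq with h | h
    exacts [hc1 h, hcn1 h]
  · exact hc1 (by simpa [sq, hc0] using h.symm)

theorem inv_ccInvSqOnes_mem {k : Type*} [Field k] (m : ℕ) (c : k) (i : Fin (m + 3)) :
    (ccInvSqOnes m c i)⁻¹ ∈ ({c⁻¹, c ^ 2, 1} : Set k) := by
  refine Fin.cases ?_ (Fin.cases ?_ (Fin.cases ?_ fun _ ↦ ?_)) i <;>
    simp only [ccInvSqOnes, Fin.cons_zero, Fin.cons_succ] <;> simp

/-- for `n ≥ 3` and `|k| ≥ 4`, the map `A ↦ (Aᵀ)⁻¹` does not preserve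
eigenvalues on `SLₙ(k)`: some `A ∈ SLₙ(k)` has an eigenvalue `μ` that is not an
eigenvalue of `(Aᵀ)⁻¹`. -/
theorem stmt7 (k : Type) [Field k] (n : ℕ) (hn : 3 ≤ n)
    (hk : 4 ≤ Nat.card k ∨ Infinite k) :
    ∃ (A : Matrix.SpecialLinearGroup (Fin n) k) (μ : k),
      μ ∈ spectrum k (A : Matrix (Fin n) (Fin n) k) ∧
      μ ∉ spectrum k (((A : Matrix (Fin n) (Fin n) k).transpose)⁻¹) := by
  obtain ⟨m, rfl⟩ := Nat.exists_eq_add_of_le' hn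
  obtain ⟨c, hc0, hc1, hcn1⟩ := exists_ne_zero_ne_one_ne_neg_one hk
  have hprod := prod_ccInvSqOnes m hc0
  have hne : ∀ i, ccInvSqOnes m c i ≠ 0 := fun i ↦
    Finset.prod_ne_zero_iff.1 (hprod ▸ one_ne_zero) i (Finset.mem_univ i)
  refine ⟨⟨diagonal (ccInvSqOnes m c), by rw [det_diagonal, hprod]⟩, c, ?_, ?_⟩
  · rw [spectrum_diagonal]
    exact ⟨0, rfl⟩
  · change c ∉ spectrum k (diagonal (ccInvSqOnes m c))ᵀ⁻¹
    rw [spectrum_inv_transpose_diagonal hne]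
    rintro ⟨i, hi : (ccInvSqOnes m c i)⁻¹ = c⟩
    have hmem := inv_ccInvSqOnes_mem m c i
    rw [hi] at hmem
    exact self_notMem_inv_sq_one hc0 hc1 hcn1 hmem
end

section
/- Let e be a directed edge in a graph of groups with edge group A_e and bijective inclusion maps α_e, α_ē. If (g_1, e, g_2, ē, g_3) and (g'_1, e, g'_2, ē, g'_3) are paths with g_1 α_e(α_ē^{-1}(g_2)) g_3 = g'_1 α_e(α_ē^{-1}(g'_2)) g'_3, then there exist h_1, h_2 ∈ A_e with g'_1 = g_1 α_e(h_1)^{-1}, g'_2 = α_ē(h_1) g_2 α_ē(h_2)^{-1}, and g'_3 = α_e(h_2) g_3. -/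
/-! Write `α_e(h₁) = g₁'⁻¹ g₁` and `α_e(h₂) = g₃' g₃⁻¹`, which is possible since `α_e` is onto.
The first and third identities then hold by construction, and cancelling the outer factors in
`g₁ α_e(a) g₃ = g₁' α_e(a') g₃'` gives `α_e(a') = α_e(h₁ a h₂⁻¹)`, so `a' = h₁ a h₂⁻¹` by injectivity
of `α_e`; applying `α_ē` yields the middle identity. -/

theorem eq_mul_mul_inv_of_mul_mul_eq {G : Type*} [Group G] {g₁ g₁' x x' g₃ g₃' : G}
    (h : g₁ * x * g₃ = g₁' * x' * g₃') : x' = g₁'⁻¹ * g₁ * x * (g₃' * g₃⁻¹)⁻¹ :=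
  calc x' = g₁'⁻¹ * (g₁' * x' * g₃') * g₃'⁻¹ := by group
    _ = g₁'⁻¹ * g₁ * x * (g₃' * g₃⁻¹)⁻¹ := by rw [← h]; group

theorem stmt16_general {Ai Aj Ae : Type} [Group Ai] [Group Aj] [Group Ae]
    (αe : Ae →* Ai) (αeBar : Ae →* Aj)
    (hαe : Function.Bijective αe)
    (g1 g1' g3 g3' : Ai) (g2 g2' : Aj) (a a' : Ae)
    (ha : αeBar a = g2) (ha' : αeBar a' = g2')
    (heq : g1 * αe a * g3 = g1' * αe a' * g3') :
    ∃ h1 h2 : Ae,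
      g1' = g1 * (αe h1)⁻¹ ∧
      g2' = αeBar h1 * g2 * (αeBar h2)⁻¹ ∧
      g3' = αe h2 * g3 := by
  obtain ⟨h1, hh1⟩ := hαe.surjective (g1'⁻¹ * g1)
  obtain ⟨h2, hh2⟩ := hαe.surjective (g3' * g3⁻¹)
  have ha'_eq : a' = h1 * a * h2⁻¹ := hαe.injective <| by
    rw [map_mul, map_mul, map_inv, hh1, hh2]
    exact eq_mul_mul_inv_of_mul_mul_eq heq
  refine ⟨h1, h2, ?_, ?_, ?_⟩
  · rw [hh1]; group
  · rw [← ha', ← ha, ha'_eq, map_mul, map_mul, map_inv]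
  · rw [hh2]; group

/-- for a dart `e` with edge group `Ae` and bijective inclusions
`α_e : Ae → A_i`, `α_{ē} : Ae → A_j`, if two paths `(g₁, e, g₂, ē, g₃)` and
`(g₁', e, g₂', ē, g₃')` (with `g₂ = α_{ē}(a)`, `g₂' = α_{ē}(a')`) satisfy
`g₁ α_e(α_{ē}⁻¹(g₂)) g₃ = g₁' α_e(α_{ē}⁻¹(g₂')) g₃'`, then there are `h₁, h₂ ∈ Ae` with
`g₁' = g₁ α_e(h₁)⁻¹`, `g₂' = α_{ē}(h₁) g₂ α_{ē}(h₂)⁻¹` and `g₃' = α_e(h₂) g₃`. -/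
theorem stmt16 {Ai Aj Ae : Type} [Group Ai] [Group Aj] [Group Ae]
    (αe : Ae →* Ai) (αeBar : Ae →* Aj)
    (hαe : Function.Bijective αe) (hαeBar : Function.Bijective αeBar)
    (g1 g1' g3 g3' : Ai) (g2 g2' : Aj) (a a' : Ae)
    (ha : αeBar a = g2) (ha' : αeBar a' = g2')
    (heq : g1 * αe a * g3 = g1' * αe a' * g3') :
    ∃ h1 h2 : Ae,
      g1' = g1 * (αe h1)⁻¹ ∧
      g2' = αeBar h1 * g2 * (αeBar h2)⁻¹ ∧
      g3' = αe h2 * g3 :=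
  stmt16_general αe αeBar hαe g1 g1' g3 g3' g2 g2' a a' ha ha' heq
end
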